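/- arXiv:1907.07330 — 4 statements merged into one kernel-verified Lean document; each statement's English description precedes it below -/
import Mathlib

section
/- Let ℓ : ℛ → ℝ^𝒴 be a non-redundant discrete loss and let L : ℝ^d → ℝ^𝒴 be a loss such that for every p ∈ Δ_𝒴 the infimum inf_{u∈ℝ^d} ⟨p, L(u)⟩ is attained. Then L embeds ℓ if and only if risk_L(p) = risk_ℓ(p) for all p ∈ Δ_𝒴. -/
/-- The probability simplex over a finite outcome set `Y`. -/
def probSimplex (Y : Type*) [Fintype Y] : Set (Y → ℝ) :=
  {p | (∀ y, 0 ≤ p y) ∧ ∑ y, p y = 1}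

/-- Expected loss `⟨p, v⟩ = ∑ y, p y * v y`. -/
def elloss {Y : Type*} [Fintype Y] (p : Y → ℝ) (v : Y → ℝ) : ℝ :=
  ∑ y, p y * v y

/-- `u` minimizes the expected loss `⟨p, L ·⟩` over the report set. -/
def Minimizes {U Y : Type*} [Fintype Y] (p : Y → ℝ) (L : U → Y → ℝ) (u : U) : Prop :=
  ∀ u' : U, elloss p (L u) ≤ elloss p (L u')

/-- The Bayes risk `inf_u ⟨p, L u⟩`. -/
noncomputable def bayesRisk {U Y : Type*} [Fintype Y] (p : Y → ℝ) (L : U → Y → ℝ) : ℝ :=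
  sInf (Set.range fun u => elloss p (L u))

/-- `L` embeds the discrete loss `ℓ`. -/
def Embeds {R Y : Type*} [Fintype Y] {d : ℕ}
    (L : (Fin d → ℝ) → Y → ℝ) (ℓ : R → Y → ℝ) : Prop :=
  ∃ φ : R → (Fin d → ℝ), Function.Injective φ ∧ (∀ r, L (φ r) = ℓ r) ∧
    ∀ p ∈ probSimplex Y, ∀ r, Minimizes p ℓ r ↔ Minimizes p L (φ r)

/-- A polyhedral convex function: a pointwise maximum of finitely many affine functions. -/
def IsPolyhedralFn {d : ℕ} (g : (Fin d → ℝ) → ℝ) : Prop :=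
  ∃ (m : ℕ) (a : Fin (m + 1) → Fin d → ℝ) (b : Fin (m + 1) → ℝ),
    ∀ x, g x = Finset.univ.sup' Finset.univ_nonempty (fun i => ∑ j, a i j * x j + b i)

open Filter Topology

section Aux

variable {Y : Type*} [Fintype Y]

lemma elloss_nonneg {p v : Y → ℝ} (hp : ∀ y, 0 ≤ p y) (hv : ∀ y, 0 ≤ v y) :
    0 ≤ elloss p v :=
  Finset.sum_nonneg fun y _ => mul_nonneg (hp y) (hv y)

lemma elloss_combo (s : ℝ) (p q v : Y → ℝ) :
    elloss ((1 - s) • p + s • q) v = (1 - s) * elloss p v + s * elloss q v := by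
  unfold elloss
  rw [Finset.mul_sum, Finset.mul_sum, ← Finset.sum_add_distrib]
  refine Finset.sum_congr rfl fun y _ => ?_
  simp only [Pi.add_apply, Pi.smul_apply, smul_eq_mul]
  ring

lemma combo_mem_simplex {p q : Y → ℝ} (hp : p ∈ probSimplex Y) (hq : q ∈ probSimplex Y)
    {t : ℝ} (h0 : 0 ≤ t) (h1 : t ≤ 1) : (1 - t) • p + t • q ∈ probSimplex Y := by
  constructor
  · intro y
    have h2 := hp.1 y; have h3 := hq.1 y
    simp only [Pi.add_apply, Pi.smul_apply, smul_eq_mul]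
    nlinarith
  · simp only [Pi.add_apply, Pi.smul_apply, smul_eq_mul]
    rw [Finset.sum_add_distrib, ← Finset.mul_sum, ← Finset.mul_sum, hp.2, hq.2]
    ring

lemma exists_perturb {R : Type*} [Fintype R] (ℓ : R → Y → ℝ) (p q : Y → ℝ)
    (r : R) (hstrict : ∀ r', r' ≠ r → elloss p (ℓ r) < elloss p (ℓ r')) :
    ∃ t : ℝ, 0 < t ∧ t < 1 ∧
      ∀ r', r' ≠ r → elloss ((1 - t) • p + t • q) (ℓ r)
        < elloss ((1 - t) • p + t • q) (ℓ r') := by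
  have h1 : ∀ᶠ t in 𝓝[>] (0:ℝ), t < 1 :=
    (eventually_lt_nhds one_pos).filter_mono nhdsWithin_le_nhds
  have h0 : ∀ᶠ t in 𝓝[>] (0:ℝ), 0 < t := self_mem_nhdsWithin
  have h2 : ∀ r' : R, ∀ᶠ t in 𝓝[>] (0:ℝ), r' ≠ r →
      elloss ((1 - t) • p + t • q) (ℓ r) < elloss ((1 - t) • p + t • q) (ℓ r') := by
    intro r'
    by_cases hr : r' = r
    · exact Eventually.of_forall fun t h => absurd hr h
    · have hc : ContinuousAt (fun t : ℝ => (1 - t) * elloss p (ℓ r) + t * elloss q (ℓ r)) 0 := by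
        fun_prop
      have hc' : ContinuousAt (fun t : ℝ => (1 - t) * elloss p (ℓ r') + t * elloss q (ℓ r')) 0 := by
        fun_prop
      have hlt : (fun t : ℝ => (1 - t) * elloss p (ℓ r) + t * elloss q (ℓ r)) 0
          < (fun t : ℝ => (1 - t) * elloss p (ℓ r') + t * elloss q (ℓ r')) 0 := by
        simpa using hstrict r' hr
      have := (hc.eventually_lt hc' hlt).filter_mono (nhdsWithin_le_nhds (s := Set.Ioi (0:ℝ)))
      refine this.mono fun t ht _ => ?_
      rw [elloss_combo, elloss_combo]
      exact ht
  have h3 := Filter.eventually_all.mpr h2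
  obtain ⟨t, ht0, ht1, ht2⟩ := (h0.and (h1.and h3)).exists
  exact ⟨t, ht0, ht1, ht2⟩

lemma bayesRisk_eq_min {U : Type*} (p : Y → ℝ) (L : U → Y → ℝ) {u : U}
    (h : Minimizes p L u) : bayesRisk p L = elloss p (L u) :=
  IsLeast.csInf_eq ⟨⟨u, rfl⟩, by rintro x ⟨u', rfl⟩; exact h u'⟩

lemma bayesRisk_le {U : Type*} (p : Y → ℝ) (L : U → Y → ℝ) (u : U)
    (hp : ∀ y, 0 ≤ p y) (hL : ∀ u y, 0 ≤ L u y) :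
    bayesRisk p L ≤ elloss p (L u) :=
  csInf_le ⟨0, by rintro x ⟨u', rfl⟩; exact elloss_nonneg hp (hL u')⟩ ⟨u, rfl⟩

lemma exists_min_discrete {R : Type*} [Fintype R] [Nonempty R] (p : Y → ℝ) (ℓ : R → Y → ℝ) :
    ∃ r : R, Minimizes p ℓ r := by
  obtain ⟨r, -, hr⟩ := Finset.exists_min_image Finset.univ (fun r => elloss p (ℓ r))
    Finset.univ_nonempty
  exact ⟨r, fun r' => hr r' (Finset.mem_univ r')⟩

end Aux

/-- For a non-redundant discrete loss `ℓ` and a loss `L` whose expected loss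
attains its infimum for every `p` in the simplex, `L` embeds `ℓ` iff their Bayes risks coincide
on the simplex. -/
theorem embeds_iff_bayesRisk_eq
    {Y R : Type*} [Fintype Y] [Fintype R] [Nonempty R] {d : ℕ}
    (ℓ : R → Y → ℝ) (hℓ0 : ∀ r y, 0 ≤ ℓ r y)
    (hnonred : ∀ r : R, ∃ p ∈ probSimplex Y,
      ∀ r' : R, r' ≠ r → elloss p (ℓ r) < elloss p (ℓ r'))
    (L : (Fin d → ℝ) → Y → ℝ) (hL0 : ∀ u y, 0 ≤ L u y)
    (hatt : ∀ p ∈ probSimplex Y, ∃ u, Minimizes p L u) :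
    Embeds L ℓ ↔ ∀ p ∈ probSimplex Y, bayesRisk p L = bayesRisk p ℓ := by
  classical
  constructor
  · rintro ⟨φ, -, hφL, hφ⟩ p hp
    obtain ⟨r, hr⟩ := exists_min_discrete p ℓ
    have hLmin : Minimizes p L (φ r) := (hφ p hp r).1 hr
    rw [bayesRisk_eq_min p L hLmin, bayesRisk_eq_min p ℓ hr, hφL]
  · intro hrisk
    -- Key step: every value `ℓ r` is attained by `L`.
    have hkey : ∀ r : R, ∃ u, L u = ℓ r := by
      intro r
      obtain ⟨p, hp, hstrict⟩ := hnonred r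
      have hYne : Nonempty Y := by
        rcases isEmpty_or_nonempty Y with h | h
        · exfalso; have := hp.2; simp at this
        · exact h
      set n : ℝ := (Fintype.card Y : ℝ) with hn
      have hnpos : 0 < n := by
        simp only [hn]
        exact_mod_cast Fintype.card_pos
      set q : Y → ℝ := fun _ => 1 / n with hq
      have hqmem : q ∈ probSimplex Y := by
        constructor
        · intro y; positivity
        · simp [hq, Finset.sum_const, hn]
      obtain ⟨t, ht0, ht1, hstrict'⟩ := exists_perturb ℓ p q r hstrict
      set p' : Y → ℝ := (1 - t) • p + t • q with hp'def
      have hp' : p' ∈ probSimplex Y := combo_mem_simplex hp hqmem ht0.le ht1.le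
      have hp'pos : ∀ y, 0 < p' y := by
        intro y
        have h2 := hp.1 y
        have : 0 < t * (1 / n) := by positivity
        simp only [hp'def, Pi.add_apply, Pi.smul_apply, smul_eq_mul, hq]
        nlinarith
      have hmin' : Minimizes p' ℓ r := by
        intro r'
        by_cases h : r' = r
        · subst h; exact le_refl _
        · exact (hstrict' r' h).le
      obtain ⟨u, hu⟩ := hatt p' hp'
      have heq : elloss p' (L u) = elloss p' (ℓ r) := by
        rw [← bayesRisk_eq_min p' L hu, ← bayesRisk_eq_min p' ℓ hmin', hrisk p' hp']
      -- coordinatewise inequality via perturbation toward each vertex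
      have hge : ∀ y, ℓ r y ≤ L u y := by
        intro y
        set e : Y → ℝ := fun y' => if y' = y then 1 else 0 with he
        have hemem : e ∈ probSimplex Y := by
          constructor
          · intro y'; simp only [he]; split <;> norm_num
          · simp [he]
        obtain ⟨s, hs0, hs1, hstrict''⟩ := exists_perturb ℓ p' e r hstrict'
        set p'' : Y → ℝ := (1 - s) • p' + s • e with hp''def
        have hp'' : p'' ∈ probSimplex Y := combo_mem_simplex hp' hemem hs0.le hs1.le
        have hmin'' : Minimizes p'' ℓ r := by
          intro r'
          by_cases h : r' = r
          · subst h; exact le_refl _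
          · exact (hstrict'' r' h).le
        have hle1 : elloss p'' (ℓ r) ≤ elloss p'' (L u) := by
          calc elloss p'' (ℓ r) = bayesRisk p'' ℓ := (bayesRisk_eq_min p'' ℓ hmin'').symm
            _ = bayesRisk p'' L := (hrisk p'' hp'').symm
            _ ≤ elloss p'' (L u) := bayesRisk_le p'' L u hp''.1 hL0
        have helle : ∀ v : Y → ℝ, elloss e v = v y := by
          intro v
          simp [elloss, he, ite_mul, Finset.sum_ite_eq']
        rw [hp''def, elloss_combo s p' e (ℓ r), elloss_combo s p' e (L u),
          helle, helle, heq] at hle1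
        nlinarith [hle1]
      -- equality from full support
      have hzero : ∑ y, p' y * (L u y - ℓ r y) = 0 := by
        have : ∑ y, p' y * (L u y - ℓ r y) = elloss p' (L u) - elloss p' (ℓ r) := by
          unfold elloss
          rw [← Finset.sum_sub_distrib]
          exact Finset.sum_congr rfl fun y _ => by ring
        rw [this, heq, sub_self]
      have hall : ∀ y ∈ Finset.univ, p' y * (L u y - ℓ r y) = 0 :=
        (Finset.sum_eq_zero_iff_of_nonneg fun y _ =>
          mul_nonneg (hp'pos y).le (sub_nonneg.mpr (hge y))).mp hzero
      refine ⟨u, funext fun y => ?_⟩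
      have := hall y (Finset.mem_univ y)
      rcases mul_eq_zero.mp this with h | h
      · exact absurd h (hp'pos y).ne'
      · linarith [sub_eq_zero.mp h]
    choose φ hφ using hkey
    refine ⟨φ, ?_, hφ, ?_⟩
    · intro r1 r2 h
      by_contra hne
      have hval : ℓ r1 = ℓ r2 := by rw [← hφ r1, ← hφ r2, h]
      obtain ⟨p, hp, hstrict⟩ := hnonred r1
      have := hstrict r2 (Ne.symm hne)
      rw [hval] at this
      exact lt_irrefl _ this
    · intro p hp r
      constructor
      · intro hmin u
        have h1 : elloss p (L (φ r)) = elloss p (ℓ r) := by rw [hφ]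
        have h2 : elloss p (ℓ r) = bayesRisk p L := by
          rw [← bayesRisk_eq_min p ℓ hmin, hrisk p hp]
        rw [h1, h2]
        exact bayesRisk_le p L u hp.1 hL0
      · intro hmin r'
        have h1 : elloss p (ℓ r) = bayesRisk p ℓ := by
          rw [← hφ r, ← hrisk p hp]
          exact (bayesRisk_eq_min p L hmin).symm
        rw [h1]
        exact csInf_le ⟨0, by rintro x ⟨r'', rfl⟩; exact elloss_nonneg hp.1 (hℓ0 r'')⟩ ⟨r', rfl⟩
end

section
/- Every polyhedral loss L : ℝ^d → ℝ^𝒴 embeds some discrete loss; that is, there exist a finite set ℛ and a discrete loss ℓ : ℛ → ℝ^𝒴 such that L embeds ℓ. -/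
open Finset

open scoped Classical

section LinearInequalities

variable {V ι : Type*} [AddCommGroup V] [Module ℝ V] (A : ι → V →ₗ[ℝ] ℝ) (b : ι → ℝ)

def Feasible (z : V) : Prop := ∀ k, A k z ≤ b k

/-- Some feasible point at which the constraints in `J` are tight (junk if there is none). Being
chosen independently of any objective, these finitely many points contain a minimizer of every
linear objective that is bounded below on the polyhedron. -/
noncomputable def facePoint (J : Finset ι) : V :=
  Classical.epsilon fun z => Feasible A b z ∧ ∀ k ∈ J, A k z = b k

variable {A b}

lemma facePoint_spec {J : Finset ι} (h : ∃ z, Feasible A b z ∧ ∀ k ∈ J, A k z = b k) :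
    Feasible A b (facePoint A b J) ∧ ∀ k ∈ J, A k (facePoint A b J) = b k :=
  Classical.epsilon_spec h

lemma Feasible.add_smul {z w : V} (hz : Feasible A b z) (hw : ∀ k, A k w ≤ 0) {t : ℝ}
    (ht : 0 ≤ t) : Feasible A b (z + t • w) := fun k => by
  simpa using add_le_of_le_of_nonpos (hz k) (mul_nonpos_of_nonneg_of_nonpos ht (hw k))

lemma not_bddBelow_of_feasible_ray {z w : V} (hz : Feasible A b z) (hw : ∀ k, A k w ≤ 0)
    {c : V →ₗ[ℝ] ℝ} (hcw : c w < 0) : ¬BddBelow (c '' {z | Feasible A b z}) := by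
  rintro ⟨M, hM⟩
  have hray : ∀ t : ℝ, 0 ≤ t → M ≤ c z + t * c w := fun t ht => by
    simpa using hM ⟨_, hz.add_smul hw ht, rfl⟩
  have hMz : M ≤ c z := by simpa using hray 0 le_rfl
  have := hray ((c z - M + 1) / -c w) (div_nonneg (by linarith) (by linarith))
  rw [div_mul_eq_mul_div, div_neg, mul_div_cancel_right₀ _ hcw.ne] at this
  linarith

lemma apply_facePoint_le {J : Finset ι} {z : V} (hz : Feasible A b z)
    (hJ : ∀ k ∈ J, A k z = b k) {c : V →ₗ[ℝ] ℝ} (hc : ∀ w, (∀ k ∈ J, A k w = 0) → 0 ≤ c w) :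
    c (facePoint A b J) ≤ c z := by
  have hface := (facePoint_spec ⟨z, hz, hJ⟩).2
  have := hc (z - facePoint A b J) fun k hk => by rw [map_sub, hJ k hk, hface k hk, sub_self]
  rwa [map_sub, sub_nonneg] at this

variable [Fintype ι]

variable (A b) in
noncomputable def slackSet (z : V) : Finset ι := {k | A k z < b k}

/-- Ratio test: move from `z` along `w` until the first constraint increasing along `w` becomes
tight. -/
lemma exists_feasible_add_smul_slackSet_ssubset {z w : V} (hz : Feasible A b z)
    (hw : ∀ k, A k z = b k → A k w = 0) (hpos : ∃ k, 0 < A k w) :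
    ∃ t : ℝ, 0 < t ∧ Feasible A b (z + t • w) ∧ slackSet A b (z + t • w) ⊂ slackSet A b z := by
  have hslack : ∀ k, 0 < A k w → A k z < b k := fun k hk =>
    (hz k).lt_of_ne fun h => hk.ne' (hw k h)
  obtain ⟨k₁, hk₁⟩ := hpos
  obtain ⟨k₀, hk₀, hmin⟩ := ({k | 0 < A k w} : Finset ι).exists_min_image
    (fun k => (b k - A k z) / A k w) ⟨k₁, by simpa using hk₁⟩
  simp only [mem_filter, mem_univ, true_and] at hk₀ hmin
  set t := (b k₀ - A k₀ z) / A k₀ w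
  have ht : 0 < t := div_pos (sub_pos.2 (hslack k₀ hk₀)) hk₀
  have hA : ∀ k, A k (z + t • w) = A k z + t * A k w := by simp
  refine ⟨t, ht, fun k => ?_, ?_⟩
  · rw [hA]
    rcases le_or_gt (A k w) 0 with h | h
    · nlinarith [hz k]
    · have := (le_div_iff₀ h).1 (hmin k h)
      linarith
  · refine ssubset_of_subset_of_ne (fun k hk => ?_) fun h => ?_
    · simp only [slackSet, mem_filter, mem_univ, true_and] at hk ⊢
      refine (hz k).lt_of_ne fun hk' => ?_
      rw [hA, hk', hw k hk'] at hk
      simp at hk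
    · have : k₀ ∈ slackSet A b (z + t • w) := h ▸ by simpa [slackSet] using hslack k₀ hk₀
      simp [slackSet, hA, t, div_mul_cancel₀ _ hk₀.ne'] at this

lemma exists_descent_slackSet_ssubset {c : V →ₗ[ℝ] ℝ}
    (hbdd : BddBelow (c '' {z | Feasible A b z})) {z w : V} (hz : Feasible A b z)
    (hw : ∀ k, A k z = b k → A k w = 0) (hcw : c w < 0) :
    ∃ z', Feasible A b z' ∧ slackSet A b z' ⊂ slackSet A b z ∧ c z' ≤ c z := by
  by_cases hpos : ∃ k, 0 < A k w
  · obtain ⟨t, ht, hz', hss⟩ := exists_feasible_add_smul_slackSet_ssubset hz hw hpos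
    refine ⟨_, hz', hss, ?_⟩
    simpa using mul_nonpos_of_nonneg_of_nonpos ht.le hcw.le
  · push Not at hpos
    exact absurd hbdd (not_bddBelow_of_feasible_ray hz hpos hcw)

theorem exists_facePoint_le {c : V →ₗ[ℝ] ℝ} (hbdd : BddBelow (c '' {z | Feasible A b z}))
    {z : V} (hz : Feasible A b z) :
    ∃ J, Feasible A b (facePoint A b J) ∧ c (facePoint A b J) ≤ c z := by
  induction hn : (slackSet A b z).card using Nat.strong_induction_on generalizing z with
  | _ n ih =>
    by_cases hdesc : ∃ w, (∀ k, A k z = b k → A k w = 0) ∧ c w < 0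
    · obtain ⟨w, hw, hcw⟩ := hdesc
      obtain ⟨z', hz', hss, hle⟩ := exists_descent_slackSet_ssubset hbdd hz hw hcw
      obtain ⟨J, hJ, hJle⟩ := ih _ (hn ▸ card_lt_card hss) hz' rfl
      exact ⟨J, hJ, hJle.trans hle⟩
    · push Not at hdesc
      have htight : ∀ k ∈ ({k | A k z = b k} : Finset ι), A k z = b k := by simp
      refine ⟨_, (facePoint_spec ⟨z, hz, htight⟩).1, apply_facePoint_le hz htight fun w hw => ?_⟩
      exact hdesc w fun k hk => hw k (by simpa using hk)

theorem exists_facePoint_isMinOn {c : V →ₗ[ℝ] ℝ} (hbdd : BddBelow (c '' {z | Feasible A b z}))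
    {z : V} (hz : Feasible A b z) :
    ∃ J, Feasible A b (facePoint A b J) ∧ IsMinOn c {z | Feasible A b z} (facePoint A b J) := by
  obtain ⟨J₀, hJ₀, -⟩ := exists_facePoint_le hbdd hz
  obtain ⟨J, hJ, hmin⟩ := ({J | Feasible A b (facePoint A b J)} : Finset (Finset ι))
    |>.exists_min_image (fun J => c (facePoint A b J)) ⟨J₀, by simpa using hJ₀⟩
  simp only [mem_filter, mem_univ, true_and] at hJ hmin
  refine ⟨J, hJ, fun z' hz' => ?_⟩
  obtain ⟨J', hJ', hle⟩ := exists_facePoint_le hbdd hz'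
  exact (hmin J' hJ').trans hle

end LinearInequalities

section Polyhedral

variable {Y : Type*} {d : ℕ}

/-- The constraint `a ⬝ᵥ u - t y ≤ -b` on `(u, t)` says that the affine piece `u ↦ a ⬝ᵥ u + b`
lies below `t y`. -/
def epigraphConstraint (a : Fin d → ℝ) (y : Y) : (Fin d → ℝ) × (Y → ℝ) →ₗ[ℝ] ℝ :=
  (dotProductBilin ℝ ℝ a).coprod (-LinearMap.proj y)

lemma feasible_epigraphConstraint_iff {L : (Fin d → ℝ) → Y → ℝ} {m : Y → ℕ}
    {a : ∀ y, Fin (m y + 1) → Fin d → ℝ} {b : ∀ y, Fin (m y + 1) → ℝ}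
    (hL : ∀ y u, L u y = univ.sup' univ_nonempty fun i => ∑ j, a y i j * u j + b y i)
    (z : (Fin d → ℝ) × (Y → ℝ)) :
    Feasible (fun k : (y : Y) × Fin (m y + 1) => epigraphConstraint (a k.1 k.2) k.1)
      (fun k => -b k.1 k.2) z ↔ ∀ y, L z.1 y ≤ z.2 y := by
  simp only [Feasible, Sigma.forall, hL, sup'_le_iff, mem_univ, forall_const,
    epigraphConstraint, LinearMap.coprod_apply, dotProductBilin_apply_apply, dotProduct,
    LinearMap.neg_apply, LinearMap.coe_proj, Function.eval]
  exact forall₂_congr fun y i => by constructor <;> intro h <;> linarith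

variable [Fintype Y]

lemma elloss_mono {p v w : Y → ℝ} (hp : ∀ y, 0 ≤ p y) (hvw : ∀ y, v y ≤ w y) :
    elloss p v ≤ elloss p w :=
  sum_le_sum fun y _ => mul_le_mul_of_nonneg_left (hvw y) (hp y)

theorem exists_finset_forall_minimizes {L : (Fin d → ℝ) → Y → ℝ}
    (hpoly : ∀ y, IsPolyhedralFn fun u => L u y) :
    ∃ S : Finset (Fin d → ℝ), ∀ p, (∀ y, 0 ≤ p y) →
      BddBelow (Set.range fun u => elloss p (L u)) → ∃ x ∈ S, Minimizes p L x := by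
  choose m a b hL using hpoly
  set A := fun k : (y : Y) × Fin (m y + 1) => epigraphConstraint (a k.1 k.2) k.1
  set B := fun k : (y : Y) × Fin (m y + 1) => -b k.1 k.2
  have hfeas : ∀ z, Feasible A B z ↔ ∀ y, L z.1 y ≤ z.2 y :=
    feasible_epigraphConstraint_iff fun y => hL y
  refine ⟨univ.image fun J => (facePoint A B J).1, fun p hp ⟨M, hM⟩ => ?_⟩
  set c := (dotProductBilin ℝ ℝ p).comp (LinearMap.snd ℝ (Fin d → ℝ) (Y → ℝ))
  have hc : ∀ z, Feasible A B z → elloss p (L z.1) ≤ c z := fun z hz =>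
    elloss_mono hp ((hfeas z).1 hz)
  have hbdd : BddBelow (c '' {z | Feasible A B z}) := by
    refine ⟨M, ?_⟩
    rintro _ ⟨z, hz, rfl⟩
    exact (hM ⟨z.1, rfl⟩).trans (hc z hz)
  have hgraph : ∀ u, Feasible A B (u, L u) := fun u => (hfeas _).2 fun _ => le_rfl
  obtain ⟨J, hJ, hmin⟩ := exists_facePoint_isMinOn hbdd (hgraph 0)
  refine ⟨_, mem_image_of_mem _ (mem_univ J), fun u => ?_⟩
  calc elloss p (L (facePoint A B J).1) ≤ c (facePoint A B J) := hc _ hJ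
    _ ≤ c (u, L u) := hmin (hgraph u)
    _ = elloss p (L u) := rfl

theorem embeds_of_forall_exists_minimizes {R : Type*} {L : (Fin d → ℝ) → Y → ℝ}
    {φ : R → Fin d → ℝ} (hφ : Function.Injective φ)
    (h : ∀ p ∈ probSimplex Y, ∃ r, Minimizes p L (φ r)) : Embeds L fun r => L (φ r) := by
  refine ⟨φ, hφ, fun _ => rfl, fun p hp r => ⟨fun hr u => ?_, fun hr r' => hr (φ r')⟩⟩
  obtain ⟨r₀, hr₀⟩ := h p hp
  exact (hr r₀).trans (hr₀ u)

end Polyhedral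

/-- Every polyhedral loss embeds some discrete loss. -/
theorem polyhedral_loss_embeds_discrete
    {Y : Type*} [Fintype Y] {d : ℕ}
    (L : (Fin d → ℝ) → Y → ℝ) (hL0 : ∀ u y, 0 ≤ L u y)
    (hpoly : ∀ y, IsPolyhedralFn (fun u => L u y)) :
    ∃ (m : ℕ) (ℓ : Fin (m + 1) → Y → ℝ), (∀ r y, 0 ≤ ℓ r y) ∧ Embeds L ℓ := by
  obtain ⟨S, hS⟩ := exists_finset_forall_minimizes hpoly
  have hbdd : ∀ p ∈ probSimplex Y, BddBelow (Set.range fun u => elloss p (L u)) :=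
    fun p hp => ⟨0, by
      rintro _ ⟨u, rfl⟩
      exact sum_nonneg fun y _ => mul_nonneg (hp.1 y) (hL0 u y)⟩
  have hS_ne : S.Nonempty := by
    obtain ⟨x, hx, -⟩ := hS 0 (fun _ => le_rfl) ⟨0, by rintro _ ⟨u, rfl⟩; simp [elloss]⟩
    exact ⟨x, hx⟩
  obtain ⟨m, hm⟩ := Nat.exists_eq_add_one_of_ne_zero (card_pos.2 hS_ne).ne'
  let e : Fin (m + 1) ≃ S := (finCongr hm).symm.trans S.equivFin.symm
  refine ⟨m, fun r => L (e r), fun r y => hL0 _ y,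
    embeds_of_forall_exists_minimizes (Subtype.val_injective.comp e.injective) fun p hp => ?_⟩
  obtain ⟨x, hx, hmin⟩ := hS p hp.1 (hbdd p hp)
  exact ⟨e.symm ⟨x, hx⟩, by simpa using hmin⟩
end

section
/- Let L : ℝ^d → ℝ^𝒴 be a polyhedral loss that embeds a discrete loss ℓ : ℛ → ℝ^𝒴. Then there exists a link function ψ : ℝ^d → ℛ such that (L, ψ) is calibrated with respect to ℓ. -/
/-- `(L, ψ)` is calibrated with respect to `ℓ`: for each `p` in the simplex, the infimum of
expected surrogate loss over reports linking outside `argmin ⟨p, ℓ ·⟩` is strictly greater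
than the overall infimum (equivalently, exceeds it by some `ε > 0`; the condition is vacuous,
i.e. `inf ∅ = +∞`, when no report links to an incorrect prediction). -/
def Calibrated {R Y : Type*} [Fintype Y] {d : ℕ}
    (L : (Fin d → ℝ) → Y → ℝ) (ℓ : R → Y → ℝ) (ψ : (Fin d → ℝ) → R) : Prop :=
  ∀ p ∈ probSimplex Y, ∃ ε > 0, ∀ u : Fin d → ℝ,
    ¬ Minimizes p ℓ (ψ u) → bayesRisk p L + ε ≤ elloss p (L u)

/-!
Write `Γ p` for the set of minimizers of the expected surrogate loss `⟨p, L ·⟩`. It is a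
polyhedron, and it is a union of closed cells of the hyperplane arrangement cut out by the
affine pieces of `L` (an affine function minimal at a point of a cell is minimal on the whole
cell), so only finitely many sets `Γ p` occur. They form a π-system, since
`Γ ((p + q) / 2) = Γ p ∩ Γ q` whenever the right side is nonempty.

By Fourier–Motzkin elimination, linear images of polyhedra are polyhedra, hence closed. So
finitely many polyhedra with empty intersection have no common point within some distance
`ε > 0`. The link sends `u` to a report `r` with `φ r` in the intersection of all `Γ p` that come
within `ε` of `u`: this intersection is nonempty, hence is itself some `Γ q`, which contains an
embedded report. Calibration holds because `⟨p, L ·⟩` is a maximum of finitely many affine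
functions, and such a function exceeds its minimum by a fixed amount outside the
`ε`-neighbourhood of its minimizers, once more by closedness of polyhedral images.
-/

open Set Filter Topology Metric Pointwise

theorem exists_forall_le_and_forall_le {α β : Type*} [Finite α] [Finite β] {l : α → ℝ}
    {u : β → ℝ} (h : ∀ a b, l a ≤ u b) : ∃ t, (∀ a, l a ≤ t) ∧ ∀ b, t ≤ u b := by
  by_cases hα : Nonempty α
  · exact ⟨⨆ a, l a, fun a => le_ciSup (finite_range l).bddAbove a,
      fun b => ciSup_le fun a => h a b⟩
  · exact ⟨⨅ b, u b, fun a => (hα ⟨a⟩).elim, fun b => ciInf_le (finite_range u).bddBelow b⟩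

section Polyhedron

variable {E F : Type*} [AddCommGroup E] [Module ℝ E] [AddCommGroup F] [Module ℝ F]

def IsPolyhedron (P : Set E) : Prop :=
  ∃ (n : ℕ) (f : Fin n → E →ₗ[ℝ] ℝ) (b : Fin n → ℝ), P = {x | ∀ i, f i x ≤ b i}

theorem isPolyhedron_setOf_forall_le {ι : Type*} [Finite ι] (f : ι → E →ₗ[ℝ] ℝ) (b : ι → ℝ) :
    IsPolyhedron {x | ∀ i, f i x ≤ b i} := by
  obtain ⟨n, ⟨e⟩⟩ := Finite.exists_equiv_fin ι
  exact ⟨n, f ∘ e.symm, b ∘ e.symm, by ext x; exact e.symm.forall_congr_right.symm⟩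

theorem isPolyhedron_setOf_le (f : E →ₗ[ℝ] ℝ) (b : ℝ) : IsPolyhedron {x | f x ≤ b} := by
  simpa using isPolyhedron_setOf_forall_le (fun _ : Unit => f) fun _ => b

theorem isPolyhedron_iInter {ι : Type*} [Finite ι] {P : ι → Set E}
    (hP : ∀ i, IsPolyhedron (P i)) : IsPolyhedron (⋂ i, P i) := by
  choose n f b hP using hP
  convert isPolyhedron_setOf_forall_le (fun k : Σ i, Fin (n i) => f k.1 k.2) fun k => b k.1 k.2
  ext x
  simp [hP, Sigma.forall]

theorem IsPolyhedron.inter {P Q : Set E} (hP : IsPolyhedron P) (hQ : IsPolyhedron Q) :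
    IsPolyhedron (P ∩ Q) := by
  rw [inter_eq_iInter]
  exact isPolyhedron_iInter fun b => by cases b <;> assumption

theorem IsPolyhedron.preimage {P : Set E} (hP : IsPolyhedron P) (T : F →ₗ[ℝ] E) :
    IsPolyhedron (T ⁻¹' P) := by
  obtain ⟨n, f, b, rfl⟩ := hP
  exact ⟨n, fun i => f i ∘ₗ T, b, rfl⟩

theorem isPolyhedron_setOf_affineMap_le (A B : E →ᵃ[ℝ] ℝ) : IsPolyhedron {x | A x ≤ B x} := by
  convert isPolyhedron_setOf_le (A - B).linear (B 0 - A 0) using 1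
  ext x
  have h : A x - B x = (A - B).linear x + (A 0 - B 0) := congrFun (A - B).decomp x
  simp only [mem_ofPred_eq]
  constructor <;> intro hx <;> linarith

theorem isPolyhedron_singleton_zero [FiniteDimensional ℝ E] : IsPolyhedron ({0} : Set E) := by
  let b := Module.finBasis ℝ E
  convert isPolyhedron_setOf_forall_le
    (fun ib : Fin (Module.finrank ℝ E) × Bool => if ib.2 then b.coord ib.1 else -b.coord ib.1) 0
  ext x
  simp only [mem_singleton_iff, mem_ofPred_eq, Prod.forall, Bool.forall_bool, Pi.zero_apply,
    ite_false, ite_true, LinearMap.neg_apply, neg_nonpos, Bool.false_eq_true]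
  rw [← b.forall_coord_eq_zero_iff]
  exact ⟨fun h i => by simp [h i], fun h i => le_antisymm (h i).2 (h i).1⟩

/-- Fourier–Motzkin: keep the rows not involving the last variable, and eliminate it from every
pair of rows in which it has coefficients of opposite signs. -/
theorem IsPolyhedron.image_fst_of_prod_real {P : Set (E × ℝ)} (hP : IsPolyhedron P) :
    IsPolyhedron (Prod.fst '' P) := by
  obtain ⟨n, f, b, rfl⟩ := hP
  set c : Fin n → ℝ := fun i => f i (0, 1)
  set g : Fin n → E →ₗ[ℝ] ℝ := fun i => f i ∘ₗ LinearMap.inl ℝ E ℝ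
  have hf : ∀ i x t, f i (x, t) = g i x + t * c i := fun i x t => by
    rw [show (x, t) = (x, 0) + t • ((0 : E), (1 : ℝ)) by simp, map_add, map_smul, smul_eq_mul]
    rfl
  convert isPolyhedron_setOf_forall_le (ι := {i // c i = 0} ⊕ {i // 0 < c i} × {k // c k < 0})
    (Sum.elim (fun i => g i) fun ik => (-c ik.2) • g ik.1 + c ik.1 • g ik.2)
    (Sum.elim (fun i => b i) fun ik => -c ik.2 * b ik.1 + c ik.1 * b ik.2)
  ext x
  simp only [mem_image, mem_ofPred_eq, Sum.forall, Sum.elim_inl, Sum.elim_inr, Prod.forall,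
    Subtype.forall, Prod.exists, exists_and_right, exists_eq_right, hf, LinearMap.add_apply,
    LinearMap.smul_apply, smul_eq_mul]
  constructor
  · rintro ⟨t, ht⟩
    refine ⟨fun i hi => by simpa [hi] using ht i, fun i hi k hk => ?_⟩
    nlinarith [mul_le_mul_of_nonneg_left (ht i) (neg_nonneg.2 hk.le),
      mul_le_mul_of_nonneg_left (ht k) hi.le]
  · rintro ⟨h₀, h₂⟩
    obtain ⟨t, hlo, hup⟩ := exists_forall_le_and_forall_le
      (l := fun k : {k // c k < 0} => (b k - g k x) / c k)
      (u := fun i : {i // 0 < c i} => (b i - g i x) / c i) fun k i => by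
        rw [div_le_iff_of_neg k.2, div_mul_eq_mul_div, div_le_iff₀ i.2]
        nlinarith [h₂ i i.2 k k.2]
    refine ⟨t, fun i => ?_⟩
    rcases lt_trichotomy (c i) 0 with hi | hi | hi
    · have := hlo ⟨i, hi⟩
      rw [div_le_iff_of_neg hi] at this
      linarith
    · simpa [hi] using h₀ i hi
    · have := hup ⟨i, hi⟩
      rw [le_div_iff₀ hi] at this
      linarith

theorem IsPolyhedron.image_fst_of_prod_pi {n : ℕ} {P : Set (E × (Fin n → ℝ))}
    (hP : IsPolyhedron P) : IsPolyhedron (Prod.fst '' P) := by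
  induction n generalizing E with
  | zero =>
    have hT : Function.Surjective (LinearMap.inl ℝ E (Fin 0 → ℝ)) := fun z =>
      ⟨z.1, Prod.ext rfl (Subsingleton.elim _ _)⟩
    rw [← image_preimage_eq P hT, image_image]
    simpa using hP.preimage (LinearMap.inl ℝ E (Fin 0 → ℝ))
  | succ n ih =>
    let T : (E × (Fin n → ℝ)) × ℝ →ₗ[ℝ] E × (Fin (n + 1) → ℝ) :=
      (LinearMap.fst ℝ E _ ∘ₗ LinearMap.fst ℝ _ ℝ).prod
        ((Fin.consLinearEquiv ℝ fun _ => ℝ).toLinearMap ∘ₗ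
          (LinearMap.snd ℝ _ ℝ).prod (LinearMap.snd ℝ E _ ∘ₗ LinearMap.fst ℝ _ ℝ))
    have hT : Function.Surjective T := fun z =>
      ⟨((z.1, Fin.tail z.2), z.2 0), Prod.ext rfl (Fin.cons_self_tail z.2)⟩
    rw [← image_preimage_eq P hT, image_image]
    have := ih (hP.preimage T).image_fst_of_prod_real
    rwa [image_image] at this

theorem IsPolyhedron.image_fst [FiniteDimensional ℝ F] {P : Set (E × F)} (hP : IsPolyhedron P) :
    IsPolyhedron (Prod.fst '' P) := by
  let T := (LinearEquiv.refl ℝ E).prodCongr (Module.finBasis ℝ F).equivFun.symm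
  rw [← image_preimage_eq P T.surjective, image_image]
  exact (hP.preimage T.toLinearMap).image_fst_of_prod_pi

theorem IsPolyhedron.image [FiniteDimensional ℝ E] [FiniteDimensional ℝ F] {P : Set E}
    (hP : IsPolyhedron P) (T : E →ₗ[ℝ] F) : IsPolyhedron (T '' P) := by
  have hgraph : IsPolyhedron {z : F × E | T z.2 - z.1 = 0 ∧ z.2 ∈ P} :=
    (isPolyhedron_singleton_zero.preimage (T ∘ₗ LinearMap.snd ℝ F E - LinearMap.fst ℝ F E)).inter
      (hP.preimage (LinearMap.snd ℝ F E))
  convert hgraph.image_fst using 1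
  ext y
  simp [sub_eq_zero, and_comm]

theorem isPolyhedron_closedBall {ι : Type*} [Fintype ι] {ε : ℝ} (hε : 0 ≤ ε) :
    IsPolyhedron (closedBall (0 : ι → ℝ) ε) := by
  let f : ι × Bool → (ι → ℝ) →ₗ[ℝ] ℝ := fun ib =>
    if ib.2 then LinearMap.proj ib.1 else -LinearMap.proj ib.1
  have h : closedBall (0 : ι → ℝ) ε = {x | ∀ ib, f ib x ≤ ε} := by
    ext x
    simp [f, pi_norm_le_iff_of_nonneg hε, abs_le, forall_and, and_comm, neg_le]
  rw [h]
  exact isPolyhedron_setOf_forall_le f _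

theorem IsPolyhedron.add_closedBall {ι : Type*} [Fintype ι] {P : Set (ι → ℝ)}
    (hP : IsPolyhedron P) {ε : ℝ} (hε : 0 ≤ ε) : IsPolyhedron (P + closedBall 0 ε) := by
  rw [← image2_add, ← image_uncurry_prod, Set.prod_eq]
  let V := ι → ℝ
  exact ((hP.preimage (LinearMap.fst ℝ V V)).inter
    ((isPolyhedron_closedBall hε).preimage (LinearMap.snd ℝ V V))).image
      (LinearMap.fst ℝ V V + LinearMap.snd ℝ V V)

end Polyhedron

section Topology

variable {E : Type*} [NormedAddCommGroup E] [NormedSpace ℝ E] [FiniteDimensional ℝ E]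

theorem IsPolyhedron.isClosed {P : Set E} (hP : IsPolyhedron P) : IsClosed P := by
  obtain ⟨n, f, b, rfl⟩ := hP
  simp only [ofPred_forall]
  exact isClosed_iInter fun i =>
    isClosed_le (f i).continuous_of_finiteDimensional continuous_const

theorem IsPolyhedron.eventually_le_of_lt {P : Set E} (hP : IsPolyhedron P) (A : E →ᵃ[ℝ] ℝ)
    {m : ℝ} (h : ∀ x ∈ P, m < A x) : ∀ᶠ α in 𝓝 m, ∀ x ∈ P, α ≤ A x := by
  have hA : ∀ x, A x = A.linear x + A 0 := fun x => congrFun A.decomp x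
  have hS : (A.linear '' P)ᶜ ∈ 𝓝 (m - A 0) := by
    refine (hP.image A.linear).isClosed.isOpen_compl.mem_nhds ?_
    rintro ⟨x, hx, hxm⟩
    have := h x hx
    rw [hA, hxm] at this
    linarith
  obtain ⟨δ, hδ, hball⟩ := Metric.mem_nhds_iff.1 hS
  filter_upwards [ball_mem_nhds m hδ] with α hα x hx
  have hfar : ¬ |A.linear x - (m - A 0)| < δ := fun hd => hball hd ⟨x, hx, rfl⟩
  have hm := h x hx
  rw [mem_ball, Real.dist_eq, abs_lt] at hα
  rw [hA] at hm ⊢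
  rw [abs_of_pos (by linarith)] at hfar
  linarith

theorem eventually_iInter_add_closedBall_eq_empty {ι : Type*} [Finite ι] {P : ι → Set E}
    (hP : ∀ i, IsPolyhedron (P i)) (h : ⋂ i, P i = ∅) :
    ∀ᶠ ε in 𝓝 (0 : ℝ), ⋂ i, (P i + closedBall 0 ε) = ∅ := by
  have : Fintype ι := Fintype.ofFinite ι
  let T : (ι → E) × E →ₗ[ℝ] ι → E :=
    LinearMap.fst ℝ _ _ - LinearMap.pi fun _ => LinearMap.snd ℝ _ _
  let Q := {z : (ι → E) × E | ∀ i, z.1 i ∈ P i}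
  have hQ : IsPolyhedron Q := by
    convert isPolyhedron_iInter fun i =>
      (hP i).preimage (LinearMap.proj (R := ℝ) (φ := fun _ : ι => E) i ∘ₗ LinearMap.fst ℝ _ E)
    ext z
    simp [Q]
  have h0 : (T '' Q)ᶜ ∈ 𝓝 0 := by
    refine (hQ.image T).isClosed.isOpen_compl.mem_nhds ?_
    rintro ⟨⟨x, u⟩, hx, hxu⟩
    have hu : u ∈ ⋂ i, P i := mem_iInter.2 fun i => by
      have : x i = u := by simpa [T, sub_eq_zero] using congrFun hxu i
      exact this ▸ hx i
    simp [h] at hu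
  obtain ⟨δ, hδ, hball⟩ := Metric.mem_nhds_iff.1 h0
  filter_upwards [ball_mem_nhds (0 : ℝ) hδ] with ε hε
  rw [eq_empty_iff_forall_notMem]
  intro u hu
  simp only [mem_iInter, Set.mem_add, mem_closedBall_zero_iff] at hu
  choose x hx v hv hxv using hu
  refine hball ?_ ⟨(x, u), hx, rfl⟩
  rw [mem_ball_zero_iff, pi_norm_lt_iff hδ]
  intro i
  rw [mem_ball_zero_iff, Real.norm_eq_abs, abs_lt] at hε
  have : x i - u = -v i := by rw [← hxv i]; simp
  simp only [T, LinearMap.sub_apply, LinearMap.fst_apply, LinearMap.pi_apply, LinearMap.snd_apply,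
    Pi.sub_apply, this, norm_neg]
  linarith [hv i]

theorem eventually_forall_sInter_eq_empty {𝒢 : Set (Set E)} (h𝒢 : 𝒢.Finite)
    (hP : ∀ G ∈ 𝒢, IsPolyhedron G) :
    ∀ᶠ ε in 𝓝 (0 : ℝ), ∀ 𝒜 ⊆ 𝒢, ⋂₀ 𝒜 = ∅ → ⋂ G ∈ 𝒜, (G + closedBall 0 ε) = ∅ := by
  refine h𝒢.finite_subsets.eventually_all.2 fun 𝒜 h𝒜 => ?_
  by_cases he : ⋂₀ 𝒜 = ∅
  · have : Finite 𝒜 := (h𝒢.subset h𝒜).to_subtype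
    rw [sInter_eq_iInter] at he
    filter_upwards [eventually_iInter_add_closedBall_eq_empty (fun G : 𝒜 => hP G (h𝒜 G.2)) he]
      with ε hε _
    rwa [biInter_eq_iInter]
  · exact Eventually.of_forall fun ε h => (he h).elim

end Topology

section MaxAffine

variable {E : Type*} [AddCommGroup E] [Module ℝ E]

theorem AffineMap.sum_apply {ι : Type*} (t : Finset ι) (a : ι → E →ᵃ[ℝ] ℝ) (x : E) :
    (∑ i ∈ t, a i) x = ∑ i ∈ t, a i x :=
  map_sum (⟨⟨fun a : E →ᵃ[ℝ] ℝ => a x, rfl⟩, fun _ _ => rfl⟩ : (E →ᵃ[ℝ] ℝ) →+ ℝ) a t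

theorem AffineMap.le_of_le_lineMap (A : E →ᵃ[ℝ] ℝ) {u v : E} {t : ℝ} (ht : 1 < t)
    (h : A u ≤ A (AffineMap.lineMap v u t)) : A v ≤ A u := by
  rw [AffineMap.apply_lineMap, AffineMap.lineMap_apply_module, smul_eq_mul, smul_eq_mul] at h
  nlinarith

theorem isPolyhedron_setOf_forall_affineMap_le (s : Finset (E →ᵃ[ℝ] ℝ)) (a : E →ᵃ[ℝ] ℝ) :
    IsPolyhedron {x | ∀ b ∈ s, b x ≤ a x} := by
  convert isPolyhedron_iInter fun b : s => isPolyhedron_setOf_affineMap_le b.1 a using 1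
  ext x
  simp

def IsMaxAffine (s : Finset (E →ᵃ[ℝ] ℝ)) (g : E → ℝ) : Prop :=
  ∀ x, IsGreatest ((fun a : E →ᵃ[ℝ] ℝ => a x) '' s) (g x)

namespace IsMaxAffine

variable {s : Finset (E →ᵃ[ℝ] ℝ)} {g : E → ℝ}

theorem le (hg : IsMaxAffine s g) {a : E →ᵃ[ℝ] ℝ} (ha : a ∈ s) (x : E) : a x ≤ g x :=
  (hg x).2 ⟨a, ha, rfl⟩

theorem exists_eq (hg : IsMaxAffine s g) (x : E) : ∃ a ∈ s, a x = g x :=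
  (hg x).1

theorem eq_of_forall_le (hg : IsMaxAffine s g) {a : E →ᵃ[ℝ] ℝ} (ha : a ∈ s) {x : E}
    (h : ∀ b ∈ s, b x ≤ a x) : g x = a x := by
  obtain ⟨b, hb, hbx⟩ := hg.exists_eq x
  exact le_antisymm (hbx ▸ h b hb) (hg.le ha x)

theorem exists_forall_le (hg : IsMaxAffine s g) (x : E) : ∃ a ∈ s, ∀ b ∈ s, b x ≤ a x := by
  obtain ⟨a, ha, hax⟩ := hg.exists_eq x
  exact ⟨a, ha, fun b hb => hax ▸ hg.le hb x⟩

theorem isPolyhedron_setOf_le (hg : IsMaxAffine s g) (c : ℝ) : IsPolyhedron {x | g x ≤ c} := by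
  convert isPolyhedron_iInter fun a : s => isPolyhedron_setOf_affineMap_le a.1 (.const ℝ E c)
    using 1
  ext x
  obtain ⟨a, ha, hax⟩ := hg.exists_eq x
  simp only [mem_ofPred_eq, mem_iInter, AffineMap.const_apply, Subtype.forall]
  exact ⟨fun h b hb => (hg.le hb x).trans h, fun h => hax ▸ h a ha⟩

theorem sum {Y : Type*} [Fintype Y] {s : Y → Finset (E →ᵃ[ℝ] ℝ)} {g : Y → E → ℝ}
    (hg : ∀ y, IsMaxAffine (s y) (g y)) {w : Y → ℝ} (hw : ∀ y, 0 ≤ w y) :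
    ∃ t, IsMaxAffine t fun x => ∑ y, w y * g y x := by
  classical
  refine ⟨(Fintype.piFinset s).image fun σ => ∑ y, w y • σ y, fun x => ⟨?_, ?_⟩⟩
  · choose σ hσ hσx using fun y => (hg y).exists_eq x
    refine ⟨∑ y, w y • σ y, by simpa using ⟨σ, hσ, rfl⟩, ?_⟩
    simp [AffineMap.sum_apply, hσx]
  · rintro _ ⟨_, ha, rfl⟩
    obtain ⟨σ, hσ, rfl⟩ := Finset.mem_image.1 ha
    simp only [AffineMap.sum_apply, AffineMap.coe_smul, Pi.smul_apply, smul_eq_mul]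
    exact Finset.sum_le_sum fun y _ =>
      mul_le_mul_of_nonneg_left ((hg y).le (Fintype.mem_piFinset.1 hσ y) x) (hw y)

end IsMaxAffine

/-- The closed cell containing `u` in its relative interior of the arrangement of the
hyperplanes `a = b`, for `a b ∈ S`. -/
def orderCell (S : Finset (E →ᵃ[ℝ] ℝ)) (u : E) : Set E :=
  {v | ∀ a ∈ S, ∀ b ∈ S, a u ≤ b u → a v ≤ b v}

variable {S : Finset (E →ᵃ[ℝ] ℝ)}

theorem mem_orderCell_self (u : E) : u ∈ orderCell S u := fun _ _ _ _ h => h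

theorem finite_range_orderCell (S : Finset (E →ᵃ[ℝ] ℝ)) : (range (orderCell S)).Finite := by
  classical
  refine ((S ×ˢ S).powerset.finite_toSet.image
    fun T => {v | ∀ p ∈ T, p.1 v ≤ p.2 v}).subset ?_
  rintro _ ⟨u, rfl⟩
  refine ⟨(S ×ˢ S).filter fun p => p.1 u ≤ p.2 u,
    Finset.mem_coe.2 (Finset.mem_powerset.2 (Finset.filter_subset _ _)), ?_⟩
  ext v
  simp only [Finset.mem_filter, Finset.mem_product, and_imp, Prod.forall]
  exact ⟨fun h a b ha hb => h a ha b hb, fun h a ha b hb => h a b ha hb⟩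

theorem exists_lineMap_mem_orderCell {u v : E} (hv : v ∈ orderCell S u) :
    ∃ t > (1 : ℝ), AffineMap.lineMap v u t ∈ orderCell S u := by
  have key : ∀ a ∈ S, ∀ b ∈ S, ∀ᶠ t in 𝓝 (1 : ℝ),
      a u ≤ b u → a (AffineMap.lineMap v u t) ≤ b (AffineMap.lineMap v u t) := by
    intro a ha b hb
    simp only [AffineMap.apply_lineMap]
    simp only [AffineMap.lineMap_apply_module, smul_eq_mul]
    rcases lt_or_ge (a u) (b u) with hlt | hle
    · filter_upwards [ContinuousAt.eventually_lt (f := fun t => (1 - t) * a v + t * a u)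
        (g := fun t => (1 - t) * b v + t * b u) (by fun_prop) (by fun_prop) (by simpa using hlt)]
        with t ht _ using ht.le
    · refine Eventually.of_forall fun t h => ?_
      have := le_antisymm (hv a ha b hb h) (hv b hb a ha hle)
      rw [le_antisymm h hle, this]
  simpa [orderCell, eventually_all_finset] using
    ((eventually_all_finset S).2 fun a ha => (eventually_all_finset S).2 (key a ha)).exists_gt

theorem IsMaxAffine.exists_eqOn_orderCell {s : Finset (E →ᵃ[ℝ] ℝ)} {g : E → ℝ}
    (hg : IsMaxAffine s g) (hsS : s ⊆ S) (u : E) : ∃ a ∈ s, EqOn g a (orderCell S u) := by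
  obtain ⟨a, ha, hau⟩ := hg.exists_forall_le u
  exact ⟨a, ha, fun v hv => hg.eq_of_forall_le ha fun b hb => hv b (hsS hb) a (hsS ha) (hau b hb)⟩

end MaxAffine

theorem LinearMap.eq_zero_of_forall_mem_closedBall_le {E : Type*} [NormedAddCommGroup E]
    [NormedSpace ℝ E] (G : E →ₗ[ℝ] ℝ) {ε : ℝ} (hε : 0 < ε)
    (h : ∀ v ∈ closedBall (0 : E) ε, G v ≤ 0) : G = 0 := by
  ext w
  have hc : 0 < ε / (‖w‖ + 1) := by positivity
  have hcw : ‖(ε / (‖w‖ + 1)) • w‖ ≤ ε := by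
    rw [norm_smul, Real.norm_of_nonneg hc.le, div_mul_eq_mul_div, div_le_iff₀ (by positivity)]
    nlinarith [norm_nonneg w]
  have h₁ := h _ (mem_closedBall_zero_iff.2 hcw)
  have h₂ := h _ (mem_closedBall_zero_iff.2 ((norm_neg _).trans_le hcw))
  rw [map_neg, map_smul, smul_eq_mul] at h₂
  rw [map_smul, smul_eq_mul] at h₁
  simpa [hc.ne'] using le_antisymm h₁ (neg_nonpos.1 h₂)

theorem IsMaxAffine.exists_pos_add_le {ι : Type*} [Fintype ι] {s : Finset ((ι → ℝ) →ᵃ[ℝ] ℝ)}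
    {f : (ι → ℝ) → ℝ} (hf : IsMaxAffine s f) (m : ℝ) {ε : ℝ} (hε : 0 < ε) :
    ∃ η > 0, ∀ u ∉ {x | f x ≤ m} + closedBall 0 ε, m + η ≤ f u := by
  -- Outside `N = {f ≤ m} + closedBall 0 ε` some row `G k ≤ h k` of `N` fails. A closed halfspace
  -- `h k ≤ G k` that meets `{f ≤ m}` belongs to a row with `G k = 0`, which never fails; on the
  -- others, `f` is bounded away from `m` on each piece where it equals one affine map.
  obtain ⟨n, G, h, hN⟩ := (hf.isPolyhedron_setOf_le m).add_closedBall hε.le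
  have key : ∀ k, ∀ a ∈ s, ∀ᶠ α in 𝓝 m,
      ∀ u, h k < G k u → (∀ b ∈ s, b u ≤ a u) → α ≤ f u := by
    intro k a ha
    by_cases hk : ∃ x, f x ≤ m ∧ h k ≤ G k x
    · obtain ⟨x, hxm, hxk⟩ := hk
      have hmem : ∀ v ∈ closedBall (0 : ι → ℝ) ε, G k (x + v) ≤ h k := fun v hv => by
        have : x + v ∈ {x | f x ≤ m} + closedBall 0 ε := add_mem_add hxm hv
        rw [hN] at this
        exact this k
      have hG : G k = 0 := (G k).eq_zero_of_forall_mem_closedBall_le hε fun v hv => by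
        have := hmem v hv
        rw [map_add] at this
        linarith
      have h0 : 0 ≤ h k := by simpa [hG] using hmem 0 (mem_closedBall_self hε.le)
      refine Eventually.of_forall fun α u hu => ?_
      simp only [hG, LinearMap.zero_apply] at hu
      linarith
    · simp only [not_exists, not_and, not_le] at hk
      have hD := (isPolyhedron_setOf_forall_affineMap_le s a).inter
        (_root_.isPolyhedron_setOf_le (-G k) (-h k))
      have hlt : ∀ x ∈ {x | ∀ b ∈ s, b x ≤ a x} ∩ {x | (-G k) x ≤ -h k}, m < a x := by
        rintro x ⟨hxa, hxk⟩
        rw [← hf.eq_of_forall_le ha hxa]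
        by_contra hxm
        simp only [mem_ofPred_eq, LinearMap.neg_apply] at hxk
        linarith [hk x (not_lt.1 hxm)]
      filter_upwards [hD.eventually_le_of_lt a hlt] with α hα u hu hau
      rw [hf.eq_of_forall_le ha hau]
      exact hα u ⟨hau, by simp only [mem_ofPred_eq, LinearMap.neg_apply]; linarith⟩
  obtain ⟨α, hα, hαf⟩ := (eventually_all.2 fun k => (eventually_all_finset s).2 (key k)).exists_gt
  refine ⟨α - m, sub_pos.2 hα, fun u hu => ?_⟩
  rw [hN] at hu
  simp only [mem_ofPred_eq, not_forall, not_le] at hu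
  obtain ⟨k, hk⟩ := hu
  obtain ⟨a, ha, hau⟩ := hf.exists_forall_le u
  linarith [hαf k a ha u hk hau]

theorem finite_range_of_forall_subset {α β : Type*} {C : α → Set α} (hC : (range C).Finite)
    (hself : ∀ u, u ∈ C u) {M : β → Set α} (hM : ∀ b, ∀ u ∈ M b, C u ⊆ M b) :
    (range M).Finite := by
  refine (hC.finite_subsets.image sUnion).subset ?_
  rintro _ ⟨b, rfl⟩
  refine ⟨{c ∈ range C | c ⊆ M b}, fun c hc => hc.1, ?_⟩
  ext u
  exact ⟨fun ⟨c, ⟨_, hc⟩, hu⟩ => hc hu, fun hu => ⟨C u, ⟨⟨u, rfl⟩, hM b u hu⟩, hself u⟩⟩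

theorem exists_forall_mem_of_mem_add_closedBall {E R : Type*} [SeminormedAddCommGroup E]
    [Nonempty R] {𝒢 : Set (Set E)} (h𝒢 : IsPiSystem 𝒢) (hfin : 𝒢.Finite) {φ : R → E}
    (hφ : ∀ G ∈ 𝒢, ∃ r, φ r ∈ G) {ε : ℝ}
    (hε : ∀ 𝒜 ⊆ 𝒢, ⋂₀ 𝒜 = ∅ → ⋂ G ∈ 𝒜, (G + closedBall 0 ε) = ∅) (u : E) :
    ∃ r, ∀ G ∈ 𝒢, u ∈ G + closedBall 0 ε → φ r ∈ G := by
  set 𝒜 := {G ∈ 𝒢 | u ∈ G + closedBall 0 ε}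
  have h𝒜 : 𝒜 ⊆ 𝒢 := sep_subset _ _
  rcases 𝒜.eq_empty_or_nonempty with h | hne
  · exact ⟨Classical.arbitrary R, fun G hG hu => (h.subset ⟨hG, hu⟩ : G ∈ (∅ : Set _)).elim⟩
  have hI : (⋂₀ 𝒜).Nonempty := by
    refine nonempty_iff_ne_empty.2 fun he => ?_
    have hu : u ∈ ⋂ G ∈ 𝒜, (G + closedBall 0 ε) := mem_iInter₂.2 fun G hG => hG.2
    rw [hε 𝒜 h𝒜 he] at hu
    exact hu
  have hfin𝒜 := hfin.subset h𝒜
  have hmem : ⋂₀ 𝒜 ∈ 𝒢 := by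
    simpa [sInter_eq_biInter] using h𝒢.biInter_mem (t := hfin𝒜.toFinset) (by simpa using hne)
      (by simpa using fun G hG => h𝒜 hG) (by simpa [sInter_eq_biInter] using hI)
  obtain ⟨r, hr⟩ := hφ _ hmem
  exact ⟨r, fun G hG hu => hr G ⟨hG, hu⟩⟩

section Loss

variable {Y : Type*} [Fintype Y]

def minimizers {U : Type*} (p : Y → ℝ) (L : U → Y → ℝ) : Set U := {u | Minimizes p L u}

theorem bayesRisk_eq_of_minimizes {U : Type*} {p : Y → ℝ} {L : U → Y → ℝ} {u : U}
    (h : Minimizes p L u) : bayesRisk p L = elloss p (L u) :=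
  IsLeast.csInf_eq ⟨⟨u, rfl⟩, by rintro _ ⟨v, rfl⟩; exact h v⟩

theorem minimizers_eq_setOf_le {U : Type*} {p : Y → ℝ} {L : U → Y → ℝ} {u : U}
    (h : Minimizes p L u) : minimizers p L = {v | elloss p (L v) ≤ elloss p (L u)} :=
  ext fun _ => ⟨fun hv => hv u, fun hv w => hv.trans (h w)⟩

theorem elloss_add_div_two (p q v : Y → ℝ) :
    elloss (fun y => (p y + q y) / 2) v = (elloss p v + elloss q v) / 2 := by
  simp only [elloss, ← Finset.sum_add_distrib, Finset.sum_div]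
  exact Finset.sum_congr rfl fun y _ => by ring

theorem minimizers_add_div_two {U : Type*} {L : U → Y → ℝ} {p q : Y → ℝ}
    (h : (minimizers p L ∩ minimizers q L).Nonempty) :
    minimizers (fun y => (p y + q y) / 2) L = minimizers p L ∩ minimizers q L := by
  obtain ⟨x, hxp, hxq⟩ := h
  ext v
  simp only [minimizers, Minimizes, mem_inter_iff, mem_ofPred_eq, elloss_add_div_two]
  refine ⟨fun hv => ?_, fun ⟨hp, hq⟩ w => by linarith [hp w, hq w]⟩
  have := hv x
  exact ⟨fun w => by linarith [hxp w, hxp v, hxq v], fun w => by linarith [hxq w, hxp v, hxq v]⟩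

theorem add_div_two_mem_probSimplex {p q : Y → ℝ} (hp : p ∈ probSimplex Y)
    (hq : q ∈ probSimplex Y) : (fun y => (p y + q y) / 2) ∈ probSimplex Y := by
  refine ⟨fun y => by linarith [hp.1 y, hq.1 y], ?_⟩
  rw [← Finset.sum_div, Finset.sum_add_distrib, hp.2, hq.2]
  norm_num

theorem isPiSystem_minimizers {U : Type*} (L : U → Y → ℝ) :
    IsPiSystem ((minimizers · L) '' probSimplex Y) := by
  rintro _ ⟨p, hp, rfl⟩ _ ⟨q, hq, rfl⟩ h
  exact ⟨_, add_div_two_mem_probSimplex hp hq, minimizers_add_div_two h⟩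

variable {E : Type*} [AddCommGroup E] [Module ℝ E] {s : Y → Finset (E →ᵃ[ℝ] ℝ)}
  {L : E → Y → ℝ}

/-- The expected loss is affine on the cell, and the cell extends beyond `u` along the segment
from any of its points, so an affine function minimal at `u` is constant on it. -/
theorem orderCell_subset_minimizers (hL : ∀ y, IsMaxAffine (s y) fun u => L u y)
    {S : Finset (E →ᵃ[ℝ] ℝ)} (hsS : ∀ y, s y ⊆ S) (p : Y → ℝ) {u : E}
    (hu : u ∈ minimizers p L) : orderCell S u ⊆ minimizers p L := by
  choose a _ ha using fun y => (hL y).exists_eqOn_orderCell (hsS y) u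
  let A := ∑ y, p y • a y
  have hA : EqOn (fun v => elloss p (L v)) A (orderCell S u) := fun v hv => by
    simp [A, elloss, AffineMap.sum_apply, ha _ hv]
  intro v hv w
  obtain ⟨t, ht, hz⟩ := exists_lineMap_mem_orderCell hv
  have hAu := hA (mem_orderCell_self u)
  have := A.le_of_le_lineMap ht (by rw [← hAu, ← hA hz]; exact hu _)
  exact ((hA hv).le.trans (this.trans hAu.symm.le)).trans (hu w)

theorem finite_range_minimizers (hL : ∀ y, IsMaxAffine (s y) fun u => L u y) :
    (range fun p : Y → ℝ => minimizers p L).Finite := by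
  classical
  exact finite_range_of_forall_subset (finite_range_orderCell (Finset.univ.biUnion s))
    mem_orderCell_self fun p _ hu => orderCell_subset_minimizers hL
      (fun y => Finset.subset_biUnion_of_mem s (Finset.mem_univ y)) p hu

theorem isMaxAffine_elloss (hL : ∀ y, IsMaxAffine (s y) fun u => L u y) {p : Y → ℝ}
    (hp : ∀ y, 0 ≤ p y) : ∃ t, IsMaxAffine t fun u => elloss p (L u) :=
  IsMaxAffine.sum hL hp

theorem isPolyhedron_minimizers (hL : ∀ y, IsMaxAffine (s y) fun u => L u y) {p : Y → ℝ}
    (hp : ∀ y, 0 ≤ p y) {u₀ : E} (hu₀ : u₀ ∈ minimizers p L) : IsPolyhedron (minimizers p L) := by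
  obtain ⟨t, ht⟩ := isMaxAffine_elloss hL hp
  rw [minimizers_eq_setOf_le hu₀]
  exact ht.isPolyhedron_setOf_le _

end Loss

theorem exists_pos_add_le_of_notMem_minimizers {Y ι : Type*} [Fintype Y] [Fintype ι]
    {s : Y → Finset ((ι → ℝ) →ᵃ[ℝ] ℝ)} {L : (ι → ℝ) → Y → ℝ}
    (hL : ∀ y, IsMaxAffine (s y) fun u => L u y) {p : Y → ℝ} (hp : ∀ y, 0 ≤ p y) {u₀ : ι → ℝ}
    (hu₀ : u₀ ∈ minimizers p L) {ε : ℝ} (hε : 0 < ε) :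
    ∃ η > 0, ∀ u ∉ minimizers p L + closedBall 0 ε, elloss p (L u₀) + η ≤ elloss p (L u) := by
  obtain ⟨t, ht⟩ := isMaxAffine_elloss hL hp
  rw [minimizers_eq_setOf_le hu₀]
  exact ht.exists_pos_add_le _ hε

theorem IsPolyhedralFn.exists_isMaxAffine {d : ℕ} {g : (Fin d → ℝ) → ℝ}
    (hg : IsPolyhedralFn g) : ∃ s, IsMaxAffine s g := by
  classical
  obtain ⟨m, a, b, hg⟩ := hg
  let A : Fin (m + 1) → (Fin d → ℝ) →ᵃ[ℝ] ℝ := fun i =>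
    (∑ j, a i j • LinearMap.proj j : (Fin d → ℝ) →ₗ[ℝ] ℝ).toAffineMap + .const ℝ _ (b i)
  have hA : ∀ i x, A i x = ∑ j, a i j * x j + b i := fun i x => by simp [A]
  refine ⟨Finset.univ.image A, fun x => ⟨?_, ?_⟩⟩
  · obtain ⟨i, -, hi⟩ := Finset.exists_mem_eq_sup' Finset.univ_nonempty
      fun i => ∑ j, a i j * x j + b i
    exact ⟨A i, by simp, by rw [hg, hi]; exact hA i x⟩
  · rintro _ ⟨_, hA', rfl⟩
    obtain ⟨i, -, rfl⟩ := Finset.mem_image.1 hA'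
    show A i x ≤ g x
    rw [hA, hg]
    exact Finset.le_sup' (fun i => ∑ j, a i j * x j + b i) (Finset.mem_univ i)

theorem polyhedral_embedding_admits_calibrated_link_general
    {Y R : Type*} [Fintype Y] [Fintype R] [Nonempty R] {d : ℕ}
    (L : (Fin d → ℝ) → Y → ℝ)
    (hpoly : ∀ y, IsPolyhedralFn (fun u => L u y))
    (ℓ : R → Y → ℝ)
    (hembed : Embeds L ℓ) :
    ∃ ψ : (Fin d → ℝ) → R, Calibrated L ℓ ψ := by
  obtain ⟨φ, -, -, hφ⟩ := hembed
  choose s hs using fun y => (hpoly y).exists_isMaxAffine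
  have hmin : ∀ p ∈ probSimplex Y, ∃ r, φ r ∈ minimizers p L := fun p hp => by
    obtain ⟨r, hr⟩ := Finite.exists_min fun r => elloss p (ℓ r)
    exact ⟨r, (hφ p hp r).1 hr⟩
  set 𝒢 := (minimizers · L) '' probSimplex Y
  have h𝒢 : 𝒢.Finite := (finite_range_minimizers hs).subset (image_subset_range _ _)
  have hpoly𝒢 : ∀ G ∈ 𝒢, IsPolyhedron G := by
    rintro _ ⟨p, hp, rfl⟩
    exact isPolyhedron_minimizers hs hp.1 (hmin p hp).choose_spec
  obtain ⟨ε, hε, hεsep⟩ := (eventually_forall_sInter_eq_empty h𝒢 hpoly𝒢).exists_gt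
  choose ψ hψ using exists_forall_mem_of_mem_add_closedBall (isPiSystem_minimizers L) h𝒢
    (by rintro _ ⟨p, hp, rfl⟩; exact hmin p hp) hεsep
  refine ⟨ψ, fun p hp => ?_⟩
  obtain ⟨r, hr⟩ := hmin p hp
  obtain ⟨η, hη, hgap⟩ := exists_pos_add_le_of_notMem_minimizers hs hp.1 hr hε
  refine ⟨η, hη, fun u hu => ?_⟩
  rw [bayesRisk_eq_of_minimizes hr]
  exact hgap u fun hnear => hu ((hφ p hp _).2 (hψ u _ ⟨p, hp, rfl⟩ hnear))

/-- A polyhedral loss that embeds a discrete loss `ℓ` admits a link function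
`ψ` such that `(L, ψ)` is calibrated with respect to `ℓ`. -/
theorem polyhedral_embedding_admits_calibrated_link
    {Y R : Type*} [Fintype Y] [Fintype R] [Nonempty R] {d : ℕ}
    (L : (Fin d → ℝ) → Y → ℝ) (hL0 : ∀ u y, 0 ≤ L u y)
    (hpoly : ∀ y, IsPolyhedralFn (fun u => L u y))
    (ℓ : R → Y → ℝ) (hℓ0 : ∀ r y, 0 ≤ ℓ r y)
    (hembed : Embeds L ℓ) :
    ∃ ψ : (Fin d → ℝ) → R, Calibrated L ℓ ψ :=
  polyhedral_embedding_admits_calibrated_link_general L hpoly ℓ hembed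
end

section
/- Let ℓ : ℛ → ℝ^𝒴 be a discrete loss, let γ(p) = argmin_{r∈ℛ} ⟨p, ℓ(r)⟩, and for r ∈ ℛ let γ_r = {p ∈ Δ_𝒴 : r ∈ γ(p)} be its level set. Suppose γ is non-redundant, i.e., there are no distinct r, r' ∈ ℛ with γ_r ⊆ γ_{r'}. Then every level set γ_r is full-dimensional in Δ_𝒴: it has nonempty interior relative to the affine hull of Δ_𝒴 (the hyperplane {x ∈ ℝ^𝒴 : ∑_y x_y = 1}). -/
/-!
Nonredundancy gives, for every `r' ≠ r`, a distribution in `γ_r` at which `r` beats `r'`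
strictly; their sum is a nonnegative weight vector at which `r` is the unique minimizer.
Unique minimality is an open condition, so a small shift along the all-ones vector makes every
coordinate positive; after normalizing we get a point of the open set
`{q | q > 0, r uniquely minimizes ⟨q, ℓ ·⟩}`, which meets the hyperplane `∑ q = 1` inside `γ_r`.
-/

open Finset

/-- The level set `γ_r`. -/
def levelSet {R Y : Type*} [Fintype Y] (ℓ : R → Y → ℝ) (r : R) : Set (Y → ℝ) :=
  {p ∈ probSimplex Y | Minimizes p ℓ r}

def UniquelyMinimizes {R Y : Type*} [Fintype Y] (p : Y → ℝ) (ℓ : R → Y → ℝ) (r : R) : Prop :=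
  ∀ r' ≠ r, elloss p (ℓ r) < elloss p (ℓ r')

section

variable {R Y : Type*} [Fintype Y] {ℓ : R → Y → ℝ} {r : R}

theorem elloss_eq_dotProduct (p v : Y → ℝ) : elloss p v = p ⬝ᵥ v := rfl

theorem continuous_elloss (v : Y → ℝ) : Continuous fun p : Y → ℝ => elloss p v :=
  continuous_id.dotProduct continuous_const

theorem UniquelyMinimizes.minimizes {p : Y → ℝ} (h : UniquelyMinimizes p ℓ r) :
    Minimizes p ℓ r := by
  intro r'
  by_cases hr' : r' = r
  · rw [hr']
  · exact (h r' hr').le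

theorem UniquelyMinimizes.smul {p : Y → ℝ} (h : UniquelyMinimizes p ℓ r) {c : ℝ} (hc : 0 < c) :
    UniquelyMinimizes (c • p) ℓ r := by
  intro r' hr'
  simp only [elloss_eq_dotProduct, smul_dotProduct, smul_eq_mul] at h ⊢
  exact mul_lt_mul_of_pos_left (h r' hr') hc

theorem isOpen_setOf_uniquelyMinimizes [Finite R] (ℓ : R → Y → ℝ) (r : R) :
    IsOpen {p : Y → ℝ | UniquelyMinimizes p ℓ r} := by
  simp only [UniquelyMinimizes, Set.ofPred_forall]
  exact isOpen_iInter_of_finite fun r' => isOpen_iInter_of_finite fun _ =>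
    isOpen_lt (continuous_elloss _) (continuous_elloss _)

theorem isOpen_setOf_forall_pos : IsOpen {p : Y → ℝ | ∀ y, 0 < p y} := by
  simp only [Set.ofPred_forall]
  exact isOpen_iInter_of_finite fun y => isOpen_lt continuous_const (continuous_apply y)

theorem mem_levelSet_of_uniquelyMinimizes {p : Y → ℝ} (hp : ∀ y, 0 ≤ p y)
    (hp1 : ∑ y, p y = 1) (h : UniquelyMinimizes p ℓ r) : p ∈ levelSet ℓ r :=
  ⟨⟨hp, hp1⟩, h.minimizes⟩

theorem exists_mem_levelSet_elloss_lt_of_not_subset {r' : R}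
    (h : ¬ levelSet ℓ r ⊆ levelSet ℓ r') :
    ∃ p ∈ levelSet ℓ r, elloss p (ℓ r) < elloss p (ℓ r') := by
  obtain ⟨p, hpr, hpr'⟩ := Set.not_subset.1 h
  have hnot : ¬ Minimizes p ℓ r' := fun hmin => hpr' ⟨hpr.1, hmin⟩
  simp only [Minimizes, not_forall, not_le] at hnot
  obtain ⟨u, hu⟩ := hnot
  exact ⟨p, hpr, (hpr.2 u).trans_lt hu⟩

theorem exists_nonneg_uniquelyMinimizes [Fintype R]
    (hnonred : ∀ r r' : R, r ≠ r' → ¬ levelSet ℓ r ⊆ levelSet ℓ r') (r : R) :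
    ∃ s : Y → ℝ, (∀ y, 0 ≤ s y) ∧ UniquelyMinimizes s ℓ r := by
  classical
  choose! x hx hlt using fun r' (hr' : r' ≠ r) =>
    exists_mem_levelSet_elloss_lt_of_not_subset (hnonred r r' hr'.symm)
  refine ⟨∑ r' ∈ univ.erase r, x r', fun y => ?_, fun r'' hr'' => ?_⟩
  · rw [Finset.sum_apply]
    exact sum_nonneg fun r' hr' => (hx r' (ne_of_mem_erase hr')).1.1 y
  · simp only [elloss_eq_dotProduct, sum_dotProduct] at hlt ⊢
    exact sum_lt_sum (fun r' hr' => (hx r' (ne_of_mem_erase hr')).2 r'')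
      ⟨r'', mem_erase.2 ⟨hr'', mem_univ _⟩, hlt r'' hr''⟩

theorem exists_pos_mem_of_isOpen {U : Set (Y → ℝ)} (hU : IsOpen U) {s : Y → ℝ} (hs : s ∈ U)
    (hs0 : ∀ y, 0 ≤ s y) : ∃ q ∈ U, ∀ y, 0 < q y := by
  obtain ⟨δ, hδ, hball⟩ := Metric.isOpen_iff.1 hU s hs
  refine ⟨s + fun _ => δ / 2, hball ?_, fun y => ?_⟩
  · rw [Metric.mem_ball, dist_pi_lt_iff hδ]
    intro y
    simp [abs_of_pos hδ, hδ]
  · simp only [Pi.add_apply]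
    linarith [hs0 y]

theorem exists_pos_sum_eq_one_uniquelyMinimizes [Nonempty Y] [Fintype R]
    (hnonred : ∀ r r' : R, r ≠ r' → ¬ levelSet ℓ r ⊆ levelSet ℓ r') (r : R) :
    ∃ p : Y → ℝ, (∀ y, 0 < p y) ∧ ∑ y, p y = 1 ∧ UniquelyMinimizes p ℓ r := by
  obtain ⟨s, hs0, hs⟩ := exists_nonneg_uniquelyMinimizes hnonred r
  obtain ⟨q, hq, hq0⟩ := exists_pos_mem_of_isOpen (isOpen_setOf_uniquelyMinimizes ℓ r) hs hs0
  have hsum : 0 < ∑ y, q y := sum_pos (fun y _ => hq0 y) univ_nonempty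
  refine ⟨(∑ y, q y)⁻¹ • q, fun y => ?_, ?_, hq.smul (inv_pos.2 hsum)⟩
  · exact mul_pos (inv_pos.2 hsum) (hq0 y)
  · simp only [Pi.smul_apply, smul_eq_mul, ← mul_sum]
    exact inv_mul_cancel₀ hsum.ne'

end

theorem nonredundant_level_sets_full_dimensional_general
    {Y R : Type*} [Fintype Y] [Nonempty Y] [Fintype R]
    (ℓ : R → Y → ℝ)
    (hnonred : ∀ r r' : R, r ≠ r' →
      ¬ ({p ∈ probSimplex Y | Minimizes p ℓ r} ⊆ {p ∈ probSimplex Y | Minimizes p ℓ r'})) :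
    ∀ r : R, ∃ p ∈ {p ∈ probSimplex Y | Minimizes p ℓ r}, ∃ ε > 0,
      ∀ q : Y → ℝ, ∑ y, q y = 1 → dist q p < ε →
        q ∈ {p ∈ probSimplex Y | Minimizes p ℓ r} := by
  intro r
  obtain ⟨p, hp0, hp1, hp⟩ := exists_pos_sum_eq_one_uniquelyMinimizes hnonred r
  obtain ⟨ε, hε, hball⟩ := Metric.isOpen_iff.1
    (isOpen_setOf_forall_pos.inter (isOpen_setOf_uniquelyMinimizes ℓ r)) p ⟨hp0, hp⟩
  refine ⟨p, mem_levelSet_of_uniquelyMinimizes (fun y => (hp0 y).le) hp1 hp, ε, hε,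
    fun q hq1 hqp => ?_⟩
  obtain ⟨hq0, hq⟩ := hball hqp
  exact mem_levelSet_of_uniquelyMinimizes (fun y => (hq0 y).le) hq1 hq

/-- For a non-redundant finite property elicited by a discrete loss, every
level set `γ_r = {p ∈ Δ_𝒴 : r ∈ argmin ⟨p, ℓ ·⟩}` is full-dimensional: it has nonempty
interior relative to the affine hull `{x : ∑ y, x y = 1}` of the simplex. -/
theorem nonredundant_level_sets_full_dimensional
    {Y R : Type*} [Fintype Y] [Nonempty Y] [Fintype R]
    (ℓ : R → Y → ℝ) (hℓ0 : ∀ r y, 0 ≤ ℓ r y)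
    (hnonred : ∀ r r' : R, r ≠ r' →
      ¬ ({p ∈ probSimplex Y | Minimizes p ℓ r} ⊆ {p ∈ probSimplex Y | Minimizes p ℓ r'})) :
    ∀ r : R, ∃ p ∈ {p ∈ probSimplex Y | Minimizes p ℓ r}, ∃ ε > 0,
      ∀ q : Y → ℝ, ∑ y, q y = 1 → dist q p < ε →
        q ∈ {p ∈ probSimplex Y | Minimizes p ℓ r} :=
  nonredundant_level_sets_full_dimensional_general ℓ hnonred
end
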